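/- arXiv:1512.06310 — 10 statements merged into one kernel-verified Lean document; each statement's English description precedes it below -/
import Mathlib

section
/- For every integer n ≥ 1, S_{n+2} ≡ S_n + 4 (mod 16). -/
/-- The (large) Schröder number `S n = ∑_{k=0}^n C(n,k)·C(n+k,k)/(k+1)`.
Each summand is an integer, so natural division is exact. -/
def schroeder (n : ℕ) : ℕ :=
  ∑ k ∈ Finset.range (n + 1), n.choose k * (n + k).choose k / (k + 1)

/-!
Writing the summands as `C(n+k, 2k)·Cat k` and combining the Catalan recurrence with the
Chu–Vandermonde type identity `∑_{p+q=n} C(p+a, 2a)·C(q+b, 2b) = C(n+a+b+1, 2a+2b+1)` shows that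
the closed form satisfies the recurrence `S (n+1) = S n + ∑_{p+q=n} S p · S q` defining Mathlib's
`Nat.largeSchroder`. Strong induction on this recurrence then gives `S n ≡ 2 + 4⌊n/2⌋ (mod 16)`
for `n ≥ 1`: peeling off the two terms with `S 0 = 1` leaves
`S (m+3) = 3 S (m+2) + ∑_{p+q=m} S (p+1) S (q+1)`, and `(2+4x)(2+4y) ≡ 4 + 8(x+y)`, whose linear
parts add up, by the symmetry `p ↔ q`, to a multiple of 16.
-/

open Finset

namespace Nat

theorem sum_antidiagonal_choose_mul_choose (m r s : ℕ) :
    ∑ p ∈ antidiagonal m, p.1.choose r * p.2.choose s = (m + 1).choose (r + s + 1) := by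
  induction m generalizing s with
  | zero =>
    rcases r with _ | r <;> rcases s with _ | s <;> simp <;>
    exact (choose_eq_zero_of_lt (by omega)).symm
  | succ m ih =>
    rw [Finset.Nat.sum_antidiagonal_succ']
    rcases s with _ | s
    · have := ih 0
      simp only [choose_zero_right, mul_one, add_zero] at this ⊢
      rw [this, choose_succ_succ' (m + 1) r]
    · simp only [choose_succ_succ' _ s, mul_add, sum_add_distrib, ih, choose_zero_succ, mul_zero,
        zero_add]
      rw [show r + (s + 1) + 1 = r + s + 1 + 1 by ring, choose_succ_succ' (m + 1)]

theorem sum_antidiagonal_add_choose_mul_add_choose {a b r s : ℕ} (ha : a ≤ r) (hb : b ≤ s)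
    (n : ℕ) : ∑ p ∈ antidiagonal n, (p.1 + a).choose r * (p.2 + b).choose s
      = (n + a + b + 1).choose (r + s + 1) := by
  rw [← sum_antidiagonal_choose_mul_choose]
  refine sum_of_injOn (fun p ↦ (p.1 + a, p.2 + b)) (fun p _ q _ h ↦ ?_) (fun p hp ↦ ?_)
    (fun p hp hp' ↦ ?_) (fun _ _ ↦ rfl)
  · simp_all [Prod.ext_iff]
  · simp only [mem_coe, HasAntidiagonal.mem_antidiagonal] at hp ⊢
    omega
  · simp only [HasAntidiagonal.mem_antidiagonal] at hp
    have : p.1 < a ∨ p.2 < b := by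
      by_contra! h
      exact hp' ⟨(p.1 - a, p.2 - b), by simp; omega, by ext <;> simp <;> omega⟩
    rcases this with h | h
    · rw [choose_eq_zero_of_lt (by omega : p.1 < r), zero_mul]
    · rw [choose_eq_zero_of_lt (by omega : p.2 < s), mul_zero]

theorem choose_mul_add_choose_div_succ (n k : ℕ) :
    n.choose k * (n + k).choose k / (k + 1) = (n + k).choose (2 * k) * catalan k := by
  rcases le_or_gt k n with hk | hk
  · have h := choose_mul (n := n + k) (k := 2 * k) (s := k) (by omega)
    rw [show n + k - k = n by omega, show 2 * k - k = k by omega,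
      ← centralBinom_eq_two_mul_choose] at h
    rw [mul_comm, ← h, Nat.mul_div_assoc _ (succ_dvd_centralBinom k),
      ← catalan_eq_centralBinom_div]
  · rw [choose_eq_zero_of_lt hk, choose_eq_zero_of_lt (by omega : n + k < 2 * k)]
    simp

theorem largeSchroder_succ_eq_add_sum_antidiagonal (n : ℕ) : largeSchroder (n + 1)
    = largeSchroder n + ∑ p ∈ antidiagonal n, largeSchroder p.1 * largeSchroder p.2 := by
  rw [largeSchroder_succ, ← Iio_add_one_eq_Iic, Nat.Iio_eq_range,
    Finset.Nat.sum_antidiagonal_eq_sum_range_succ (fun i j ↦ largeSchroder i * largeSchroder j)]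
  rfl

theorem largeSchroder_add_three (m : ℕ) : largeSchroder (m + 3)
    = 3 * largeSchroder (m + 2)
      + ∑ p ∈ antidiagonal m, largeSchroder (p.1 + 1) * largeSchroder (p.2 + 1) := by
  rw [largeSchroder_succ_eq_add_sum_antidiagonal, Finset.Nat.sum_antidiagonal_succ,
    Finset.Nat.sum_antidiagonal_succ']
  simp only [largeSchroder_zero]
  ring

end Nat

theorem sum_range_sum_antidiagonal_eq_sum_range_sum_range {M : Type*} [AddCommMonoid M] {n : ℕ}
    {f : ℕ × ℕ → M} (hf : ∀ p : ℕ × ℕ, n < p.1 + p.2 → f p = 0) :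
    ∑ j ∈ range (n + 1), ∑ p ∈ antidiagonal j, f p
      = ∑ a ∈ range (n + 1), ∑ b ∈ range (n + 1), f (a, b) := by
  set T := (range (n + 1) ×ˢ range (n + 1)).filter (fun p ↦ p.1 + p.2 ≤ n)
  have fiber : ∀ j ∈ range (n + 1), antidiagonal j = T.filter (fun p ↦ p.1 + p.2 = j) := by
    intro j hj
    ext p
    simp only [mem_range] at hj
    simp only [HasAntidiagonal.mem_antidiagonal, T, mem_filter, mem_product, mem_range]
    omega
  rw [sum_congr rfl fun j hj ↦ by rw [fiber j hj],
    sum_fiberwise_of_maps_to (fun p hp ↦ by simp only [T, mem_filter, mem_range] at hp ⊢; omega),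
    sum_filter_of_ne (fun p _ hp ↦ by contrapose! hp; exact hf p (by omega)), sum_product]

theorem schroeder_eq_sum_choose_mul_catalan {n N : ℕ} (h : n ≤ N) :
    schroeder n = ∑ k ∈ range (N + 1), (n + k).choose (2 * k) * catalan k := by
  simp only [schroeder, Nat.choose_mul_add_choose_div_succ]
  refine sum_subset (range_subset_range.mpr (by omega)) fun k hk hk' ↦ ?_
  simp only [mem_range] at hk hk'
  rw [Nat.choose_eq_zero_of_lt (by omega), zero_mul]

theorem schroeder_succ_eq_add_sum (n : ℕ) : schroeder (n + 1)
    = schroeder n + ∑ j ∈ range (n + 1), (n + j + 1).choose (2 * j + 1) * catalan (j + 1) := by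
  have pascal (j : ℕ) : (n + 1 + (j + 1)).choose (2 * (j + 1))
      = (n + j + 1).choose (2 * j + 1) + (n + (j + 1)).choose (2 * (j + 1)) := by
    rw [show n + 1 + (j + 1) = n + j + 1 + 1 by ring, show 2 * (j + 1) = 2 * j + 1 + 1 by ring,
      Nat.choose_succ_succ, ← add_assoc]
  rw [schroeder_eq_sum_choose_mul_catalan le_rfl, schroeder_eq_sum_choose_mul_catalan n.le_succ,
    sum_range_succ', sum_range_succ' _ (n + 1)]
  simp only [pascal, add_mul, sum_add_distrib, mul_zero, Nat.choose_zero_right]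
  ring

theorem sum_antidiagonal_schroeder_mul (n : ℕ) :
    ∑ p ∈ antidiagonal n, schroeder p.1 * schroeder p.2
      = ∑ j ∈ range (n + 1), (n + j + 1).choose (2 * j + 1) * catalan (j + 1) := by
  calc ∑ p ∈ antidiagonal n, schroeder p.1 * schroeder p.2
      = ∑ p ∈ antidiagonal n, ∑ a ∈ range (n + 1), ∑ b ∈ range (n + 1),
          (p.1 + a).choose (2 * a) * catalan a * ((p.2 + b).choose (2 * b) * catalan b) := by
        refine sum_congr rfl fun p hp ↦ ?_
        have := HasAntidiagonal.mem_antidiagonal.mp hp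
        rw [schroeder_eq_sum_choose_mul_catalan (N := n) (by omega),
          schroeder_eq_sum_choose_mul_catalan (N := n) (by omega), sum_mul_sum]
    _ = ∑ a ∈ range (n + 1), ∑ b ∈ range (n + 1),
          (n + a + b + 1).choose (2 * a + 2 * b + 1) * (catalan a * catalan b) := by
        rw [sum_comm]
        refine sum_congr rfl fun a _ ↦ ?_
        rw [sum_comm]
        refine sum_congr rfl fun b _ ↦ ?_
        rw [← Nat.sum_antidiagonal_add_choose_mul_add_choose (by omega) (by omega), sum_mul]
        exact sum_congr rfl fun p _ ↦ by ring
    _ = ∑ j ∈ range (n + 1), ∑ p ∈ antidiagonal j,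
          (n + p.1 + p.2 + 1).choose (2 * p.1 + 2 * p.2 + 1) * (catalan p.1 * catalan p.2) := by
        rw [sum_range_sum_antidiagonal_eq_sum_range_sum_range fun p hp ↦ ?_]
        rw [Nat.choose_eq_zero_of_lt (by omega), zero_mul]
    _ = ∑ j ∈ range (n + 1), (n + j + 1).choose (2 * j + 1) * catalan (j + 1) := by
        refine sum_congr rfl fun j _ ↦ ?_
        rw [catalan_succ', mul_sum]
        refine sum_congr rfl fun p hp ↦ ?_
        rw [← HasAntidiagonal.mem_antidiagonal.mp hp, mul_add, ← add_assoc n]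

theorem schroeder_eq_largeSchroder (n : ℕ) : schroeder n = Nat.largeSchroder n := by
  induction n using Nat.strong_induction_on with
  | _ n ih =>
    rcases n with _ | n
    · simp [schroeder]
    rw [schroeder_succ_eq_add_sum, ← sum_antidiagonal_schroeder_mul,
      Nat.largeSchroder_succ_eq_add_sum_antidiagonal, ih n n.lt_add_one]
    congr 1
    refine sum_congr rfl fun p hp ↦ ?_
    have := HasAntidiagonal.mem_antidiagonal.mp hp
    rw [ih p.1 (by omega), ih p.2 (by omega)]

theorem ZMod.sum_antidiagonal_two_add_four_mul_mul (u : ℕ → ZMod 16) (m : ℕ) :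
    ∑ p ∈ antidiagonal m, (2 + 4 * u p.1) * (2 + 4 * u p.2) = 4 * (m + 1) := by
  have h16 : (16 : ZMod 16) = 0 := rfl
  have swap : ∑ p ∈ antidiagonal m, u p.2 = ∑ p ∈ antidiagonal m, u p.1 :=
    Finset.Nat.sum_antidiagonal_swap (f := fun p ↦ u p.1)
  calc ∑ p ∈ antidiagonal m, (2 + 4 * u p.1) * (2 + 4 * u p.2)
      = ∑ p ∈ antidiagonal m, (4 + 8 * u p.1 + 8 * u p.2) :=
        sum_congr rfl fun p _ ↦ by linear_combination u p.1 * u p.2 * h16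
    _ = 4 * (m + 1) + 16 * ∑ p ∈ antidiagonal m, u p.1 := by
        simp only [sum_add_distrib, ← mul_sum, swap, sum_const, Finset.Nat.card_antidiagonal,
          nsmul_eq_mul]
        push_cast
        ring
    _ = 4 * (m + 1) := by rw [h16, zero_mul, add_zero]

theorem Nat.largeSchroder_succ_zmod_sixteen (n : ℕ) :
    (largeSchroder (n + 1) : ZMod 16) = 2 + 4 * ((n + 1) / 2 : ℕ) := by
  induction n using Nat.strong_induction_on with
  | _ n ih =>
    match n with
    | 0 => simp
    | 1 => norm_num
    | m + 2 =>
      have h16 : (16 : ZMod 16) = 0 := rfl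
      have convolution : ∑ p ∈ antidiagonal m,
          (largeSchroder (p.1 + 1) : ZMod 16) * largeSchroder (p.2 + 1) = 4 * (m + 1) := by
        rw [← ZMod.sum_antidiagonal_two_add_four_mul_mul (fun i ↦ ((i + 1) / 2 : ℕ))]
        refine sum_congr rfl fun p hp ↦ ?_
        have := HasAntidiagonal.mem_antidiagonal.mp hp
        rw [ih p.1 (by omega), ih p.2 (by omega)]
      rw [largeSchroder_add_three]
      push_cast
      rw [convolution, ih (m + 1) (by omega)]
      obtain ⟨q, rfl | rfl⟩ := Nat.even_or_odd' m
      · rw [show (2 * q + 1 + 1) / 2 = q + 1 by omega, show (2 * q + 2 + 1) / 2 = q + 1 by omega]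
        push_cast
        linear_combination (q + 1 : ZMod 16) * h16
      · rw [show (2 * q + 1 + 1 + 1) / 2 = q + 1 by omega,
          show (2 * q + 1 + 2 + 1) / 2 = q + 2 by omega]
        push_cast
        linear_combination (q + 1 : ZMod 16) * h16

theorem schroeder_add_two (n : ℕ) (hn : 1 ≤ n) :
    schroeder (n + 2) ≡ schroeder n + 4 [MOD 16] := by
  obtain ⟨m, rfl⟩ := Nat.exists_eq_add_of_le' hn
  rw [← ZMod.natCast_eq_natCast_iff, schroeder_eq_largeSchroder, schroeder_eq_largeSchroder,
    Nat.cast_add, show m + 1 + 2 = m + 2 + 1 from rfl, Nat.largeSchroder_succ_zmod_sixteen,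
    Nat.largeSchroder_succ_zmod_sixteen, show (m + 2 + 1) / 2 = (m + 1) / 2 + 1 by omega]
  push_cast
  ring
end

section
/- For all integers n ≥ 1 and α ≥ 1, s_{n+2^α} ≡ s_n + 2^α (mod 2^{α+1}), where s_n = S_n/2 is the little Schröder number. -/
/-- The little Schröder number `s n = S n / 2` (for `n ≥ 1` the number `S n` is even). -/
def littleSchroeder (n : ℕ) : ℕ := schroeder n / 2

/-!
Write `P n (x) = ∑ₖ Cₖ (n+k choose 2k) xᵏ`, so that `S n = P n (1)`. Chu–Vandermonde and the
Catalan recurrence give `P (n+1) = P n + x ∑_{i+j=n} P i P j`, and comparing this recurrence at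
`x = 1` and at `x = -2` yields `s n = (-1)ⁿ P n (-2)` for `n ≥ 1`. In
`P (n + 2^α) (-2) - P n (-2) = ∑ₖ (-2)ᵏ Cₖ ((n+k+2^α choose 2k) - (n+k choose 2k))` the term
`k = 1` is `≡ 2^α (mod 2^(α+1))`, and every term `k ≥ 2` vanishes modulo `2^(α+1)`: by
Vandermonde the difference of binomials is a combination of `(2^α choose i)` with `1 ≤ i ≤ 2k`,
which is divisible by `2^α / ordProj[2] i`, and `2ᵏ Cₖ` absorbs `2 · ordProj[2] i`.
-/

open Finset Polynomial

theorem Finset.Nat.sum_antidiagonal_add_fst {M : Type*} [AddCommMonoid M] {a : ℕ}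
    (f : ℕ → ℕ → M) (hf : ∀ i < a, ∀ j, f i j = 0) (n : ℕ) :
    ∑ ij ∈ antidiagonal n, f (ij.1 + a) ij.2 = ∑ ij ∈ antidiagonal (n + a), f ij.1 ij.2 := by
  induction a generalizing f with
  | zero => simp
  | succ a ih =>
    rw [← add_assoc, Nat.sum_antidiagonal_succ, hf 0 (by omega), zero_add,
      ← ih (fun i j => f (i + 1) j) fun i hi j => hf (i + 1) (by omega) j]
    simp only [add_assoc]

theorem Finset.Nat.sum_antidiagonal_add_snd {M : Type*} [AddCommMonoid M] {b : ℕ}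
    (f : ℕ → ℕ → M) (hf : ∀ j < b, ∀ i, f i j = 0) (n : ℕ) :
    ∑ ij ∈ antidiagonal n, f ij.1 (ij.2 + b) = ∑ ij ∈ antidiagonal (n + b), f ij.1 ij.2 := by
  rw [← Nat.sum_antidiagonal_swap]
  simp only [Prod.fst_swap, Prod.snd_swap]
  rw [Nat.sum_antidiagonal_add_fst (fun i j => f j i) hf, ← Nat.sum_antidiagonal_swap]
  rfl

theorem Finset.Nat.sum_antidiagonal_ite_fst_eq_zero {M : Type*} [AddCommMonoid M] (f : ℕ → M)
    (n : ℕ) : ∑ ij ∈ antidiagonal n, (if ij.1 = 0 then f ij.2 else 0) = f n := by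
  simp [Nat.sum_antidiagonal_eq_sum_range_succ_mk]

theorem Finset.Nat.sum_antidiagonal_ite_snd_eq_zero {M : Type*} [AddCommMonoid M] (f : ℕ → M)
    (n : ℕ) : ∑ ij ∈ antidiagonal n, (if ij.2 = 0 then f ij.1 else 0) = f n := by
  rw [← Nat.sum_antidiagonal_swap]
  exact Nat.sum_antidiagonal_ite_fst_eq_zero f n

theorem Nat.sum_antidiagonal_choose_mul_choose_s3 (p q n : ℕ) :
    ∑ ij ∈ antidiagonal n, ij.1.choose p * ij.2.choose q = (n + 1).choose (p + q + 1) := by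
  induction n generalizing p with
  | zero =>
    rcases p with _ | p <;> rcases q with _ | q <;> simp <;>
      exact (Nat.choose_eq_zero_of_lt (by omega)).symm
  | succ n ih =>
    rw [Nat.sum_antidiagonal_succ]
    rcases p with _ | p
    · have h0 := ih 0
      simp only [Nat.choose_zero_right, one_mul, zero_add] at h0 ⊢
      rw [h0, Nat.choose_succ_succ' (n + 1), add_comm]
    · simp only [Nat.choose_zero_succ, zero_mul, zero_add, Nat.choose_succ_succ, add_mul,
        sum_add_distrib, ih]
      rw [← Nat.choose_succ_succ, add_right_comm p 1 q]

theorem Nat.sum_antidiagonal_add_choose_mul_add_choose_s3 {a b p q : ℕ} (ha : a ≤ p) (hb : b ≤ q)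
    (n : ℕ) :
    ∑ ij ∈ antidiagonal n, (ij.1 + a).choose p * (ij.2 + b).choose q =
      (n + a + b + 1).choose (p + q + 1) := by
  rw [Nat.sum_antidiagonal_add_fst (fun i j => i.choose p * (j + b).choose q)
      fun i hi j => by rw [Nat.choose_eq_zero_of_lt (by omega), zero_mul],
    Nat.sum_antidiagonal_add_snd (fun i j => i.choose p * j.choose q)
      fun j hj i => by rw [Nat.choose_eq_zero_of_lt (n := j) (by omega), mul_zero],
    Nat.sum_antidiagonal_choose_mul_choose_s3]

theorem sum_antidiagonal_sum_antidiagonal_catalan_mul_choose (n m : ℕ) :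
    ∑ ij ∈ antidiagonal n, ∑ kl ∈ antidiagonal m,
        catalan kl.1 * (ij.1 + kl.1).choose (2 * kl.1) *
          (catalan kl.2 * (ij.2 + kl.2).choose (2 * kl.2)) =
      catalan (m + 1) * (n + m + 1).choose (2 * m + 1) := by
  rw [sum_comm, catalan_succ', sum_mul]
  refine sum_congr rfl ?_
  rintro ⟨k, l⟩ hkl
  rw [HasAntidiagonal.mem_antidiagonal] at hkl
  subst hkl
  dsimp only
  calc _ = catalan k * catalan l *
        ∑ ij ∈ antidiagonal n, (ij.1 + k).choose (2 * k) * (ij.2 + l).choose (2 * l) := by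
        rw [mul_sum]
        exact sum_congr rfl fun _ _ => by ring
    _ = _ := by
        rw [Nat.sum_antidiagonal_add_choose_mul_add_choose_s3 (by omega) (by omega)]
        ring_nf

theorem choose_mul_add_choose_div_succ_eq (n k : ℕ) :
    n.choose k * (n + k).choose k / (k + 1) = catalan k * (n + k).choose (2 * k) := by
  have h := Nat.choose_mul (n := n + k) (k := 2 * k) (s := k) (by omega)
  rw [Nat.add_sub_cancel, show 2 * k - k = k by omega, ← Nat.centralBinom_eq_two_mul_choose,
    ← succ_mul_catalan_eq_centralBinom] at h
  rw [mul_comm, ← h, show (n + k).choose (2 * k) * ((k + 1) * catalan k) =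
    (k + 1) * (catalan k * (n + k).choose (2 * k)) by ring, Nat.mul_div_cancel_left _ k.succ_pos]

/-- `∑ₖ Cₖ (n+k choose 2k) xᵏ`: its value at `1` is `S n`, and for `n ≥ 1` its value at `-2`
is `(-1)ⁿ s n`. -/
noncomputable def schroederPoly (n : ℕ) : ℤ[X] :=
  ∑ k ∈ range (n + 1), monomial k ((catalan k * (n + k).choose (2 * k) : ℕ) : ℤ)

theorem coeff_schroederPoly (n k : ℕ) :
    (schroederPoly n).coeff k = ((catalan k * (n + k).choose (2 * k) : ℕ) : ℤ) := by
  simp only [schroederPoly, finsetSum_coeff, coeff_monomial, sum_ite_eq', mem_range]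
  split_ifs with h
  · rfl
  · rw [Nat.choose_eq_zero_of_lt (by omega), mul_zero, Nat.cast_zero]

theorem natDegree_schroederPoly_le (n : ℕ) : (schroederPoly n).natDegree ≤ n :=
  natDegree_le_iff_coeff_eq_zero.2 fun k hk => by
    rw [coeff_schroederPoly, Nat.choose_eq_zero_of_lt (by omega), mul_zero, Nat.cast_zero]

theorem schroederPoly_zero : schroederPoly 0 = 1 := by
  simp [schroederPoly]

theorem schroederPoly_succ (n : ℕ) :
    schroederPoly (n + 1) =
      schroederPoly n + X * ∑ ij ∈ antidiagonal n, schroederPoly ij.1 * schroederPoly ij.2 := by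
  ext (_ | m)
  · simp [coeff_schroederPoly]
  · rw [coeff_add, coeff_X_mul, finsetSum_coeff]
    simp only [coeff_mul, coeff_schroederPoly]
    have h := sum_antidiagonal_sum_antidiagonal_catalan_mul_choose n m
    rw [show n + 1 + (m + 1) = n + m + 1 + 1 by ring, show 2 * (m + 1) = 2 * m + 1 + 1 by ring,
      Nat.choose_succ_succ, mul_add, ← h, show n + m + 1 = n + (m + 1) by ring]
    push_cast
    ring

theorem eval_schroederPoly_succ (x : ℤ) (n : ℕ) :
    (schroederPoly (n + 1)).eval x = (schroederPoly n).eval x +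
      x * ∑ ij ∈ antidiagonal n, (schroederPoly ij.1).eval x * (schroederPoly ij.2).eval x := by
  simp [schroederPoly_succ, eval_finsetSum]

theorem schroeder_eq_eval_one (n : ℕ) : (schroeder n : ℤ) = (schroederPoly n).eval 1 := by
  simp [schroeder, schroederPoly, eval_finsetSum, choose_mul_add_choose_div_succ_eq]

theorem eq_two_mul_sub_of_recurrences {R : Type*} [CommRing R] {a b : ℕ → R}
    (ha₀ : a 0 = 1) (hb₀ : b 0 = 1)
    (ha : ∀ n, a (n + 1) = a n + ∑ ij ∈ antidiagonal n, a ij.1 * a ij.2)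
    (hb : ∀ n, b (n + 1) = -b n + 2 * ∑ ij ∈ antidiagonal n, b ij.1 * b ij.2) (n : ℕ) :
    a n = 2 * b n - if n = 0 then 1 else 0 := by
  induction n using Nat.strong_induction_on with
  | _ n ih =>
    rcases n with _ | n
    · rw [ha₀, hb₀, if_pos rfl]
      ring
    have hab : ∀ ij ∈ antidiagonal n, a ij.1 * a ij.2 = 4 * (b ij.1 * b ij.2) -
        (if ij.1 = 0 then 2 * b ij.2 else 0) - (if ij.2 = 0 then 2 * b ij.1 else 0) +
          if ij.1 = 0 then (if ij.2 = 0 then 1 else 0) else 0 := fun ij hij => by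
      rw [HasAntidiagonal.mem_antidiagonal] at hij
      rw [ih ij.1 (by omega), ih ij.2 (by omega)]
      split_ifs <;> ring
    rw [ha, hb, ih n n.lt_succ_self, sum_congr rfl hab, sum_add_distrib, sum_sub_distrib,
      sum_sub_distrib, ← mul_sum, Nat.sum_antidiagonal_ite_fst_eq_zero (fun j => 2 * b j),
      Nat.sum_antidiagonal_ite_snd_eq_zero (fun i => 2 * b i),
      Nat.sum_antidiagonal_ite_fst_eq_zero (fun j => if j = 0 then 1 else 0),
      if_neg n.succ_ne_zero]
    ring

theorem neg_one_pow_mul_eval_neg_two_schroederPoly_succ (n : ℕ) :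
    (-1) ^ (n + 1) * (schroederPoly (n + 1)).eval (-2) =
      -((-1) ^ n * (schroederPoly n).eval (-2)) + 2 * ∑ ij ∈ antidiagonal n,
        (-1) ^ ij.1 * (schroederPoly ij.1).eval (-2) *
          ((-1) ^ ij.2 * (schroederPoly ij.2).eval (-2)) := by
  have hsign : ∀ ij ∈ antidiagonal n,
      (-1) ^ ij.1 * (schroederPoly ij.1).eval (-2) * ((-1) ^ ij.2 * (schroederPoly ij.2).eval (-2))
        = (-1) ^ n * ((schroederPoly ij.1).eval (-2) * (schroederPoly ij.2).eval (-2)) :=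
    fun ij hij => by
      rw [← HasAntidiagonal.mem_antidiagonal.1 hij, pow_add]
      ring
  rw [sum_congr rfl hsign, ← mul_sum, eval_schroederPoly_succ, pow_succ]
  ring

theorem eval_one_schroederPoly {n : ℕ} (hn : n ≠ 0) :
    (schroederPoly n).eval 1 = 2 * ((-1) ^ n * (schroederPoly n).eval (-2)) := by
  simpa [hn] using eq_two_mul_sub_of_recurrences (a := fun n => (schroederPoly n).eval 1)
    (b := fun n => (-1) ^ n * (schroederPoly n).eval (-2)) (by simp [schroederPoly_zero])
    (by simp [schroederPoly_zero]) (fun n => by simpa using eval_schroederPoly_succ 1 n)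
    neg_one_pow_mul_eval_neg_two_schroederPoly_succ n

theorem littleSchroeder_eq_eval {n : ℕ} (hn : n ≠ 0) :
    (littleSchroeder n : ℤ) = (-1) ^ n * (schroederPoly n).eval (-2) := by
  rw [littleSchroeder, Int.natCast_div, schroeder_eq_eval_one, eval_one_schroederPoly hn]
  push_cast
  exact Int.mul_ediv_cancel_left _ two_ne_zero

theorem Nat.Prime.pow_dvd_ordProj_mul_choose_pow {p a i : ℕ} (hp : p.Prime) (hi : i ≠ 0) :
    p ^ a ∣ ordProj[p] i * (p ^ a).choose i := by
  have hmul := Nat.add_one_mul_choose_eq (p ^ a - 1) (i - 1)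
  rw [Nat.sub_add_cancel (Nat.one_le_pow _ _ hp.pos),
    Nat.sub_add_cancel (Nat.one_le_iff_ne_zero.2 hi)] at hmul
  have hsplit : (p ^ a).choose i * i = ordProj[p] i * (p ^ a).choose i * ordCompl[p] i := by
    rw [mul_comm (ordProj[p] i), mul_assoc, Nat.ordProj_mul_ordCompl_eq_self]
  exact ((Nat.coprime_ordCompl hp hi).pow_left a).dvd_of_dvd_mul_right (hsplit ▸ ⟨_, hmul.symm⟩)

theorem two_mul_lt_two_pow {k : ℕ} (hk : 3 ≤ k) : 2 * k < 2 ^ k := by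
  induction k, hk using Nat.le_induction with
  | base => norm_num
  | succ k hk ih =>
    have : 2 ≤ 2 ^ k := Nat.le_self_pow (by omega) 2
    rw [pow_succ]
    omega

theorem ordProj_two_dvd_two_pow_mul_catalan {k i : ℕ} (hk : 2 ≤ k) (hi₀ : i ≠ 0)
    (hi : i ≤ 2 * k) : ordProj[2] i ∣ 2 ^ (k - 1) * catalan k := by
  have hv : 2 ^ i.factorization 2 ≤ 2 * k := (Nat.ordProj_le 2 hi₀).trans hi
  rcases hk.eq_or_lt with rfl | hk
  · have hv2 : i.factorization 2 ≤ 2 := by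
      by_contra! h
      have := Nat.pow_le_pow_right two_pos h
      omega
    rw [catalan_two]
    exact (pow_dvd_pow 2 hv2).trans (by norm_num)
  · have hvk : i.factorization 2 < k :=
      (Nat.pow_lt_pow_iff_right (by norm_num)).1 (hv.trans_lt (two_mul_lt_two_pow hk))
    exact (pow_dvd_pow 2 (by omega)).trans (dvd_mul_right _ _)

theorem two_pow_succ_dvd_two_pow_mul_catalan_mul_choose {α k i : ℕ} (hk : 2 ≤ k) (hi₀ : i ≠ 0)
    (hi : i ≤ 2 * k) : 2 ^ (α + 1) ∣ 2 ^ k * catalan k * (2 ^ α).choose i := by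
  have h := (Nat.prime_two.pow_dvd_ordProj_mul_choose_pow (a := α) hi₀).trans
    (mul_dvd_mul_right (ordProj_two_dvd_two_pow_mul_catalan hk hi₀ hi) _)
  have hpow : 2 * (2 ^ (k - 1) * catalan k * (2 ^ α).choose i) =
      2 ^ k * catalan k * (2 ^ α).choose i := by
    rw [← mul_assoc, ← mul_assoc, ← pow_succ', Nat.sub_add_cancel (by omega)]
  rw [pow_succ', ← hpow]
  exact mul_dvd_mul_left 2 h

theorem Nat.add_choose_succ_eq (m c j : ℕ) :
    (m + c).choose (j + 1) =
      m.choose (j + 1) + ∑ ij ∈ antidiagonal j, m.choose ij.1 * c.choose (ij.2 + 1) := by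
  rw [Nat.add_choose_eq, Nat.sum_antidiagonal_succ']
  simp

theorem two_pow_mul_catalan_mul_choose_add_two_pow_modEq (m : ℕ) {α k : ℕ} (hk : 2 ≤ k) :
    2 ^ k * catalan k * (m + 2 ^ α).choose (2 * k) ≡
      2 ^ k * catalan k * m.choose (2 * k) [MOD 2 ^ (α + 1)] := by
  obtain ⟨j, hj⟩ : ∃ j, 2 * k = j + 1 := ⟨2 * k - 1, by omega⟩
  rw [hj, Nat.add_choose_succ_eq, mul_add]
  refine (Nat.modEq_zero_iff_dvd.2 ?_).add_left _ |>.trans (by rw [add_zero])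
  rw [mul_sum]
  refine dvd_sum fun ij hij => ?_
  rw [HasAntidiagonal.mem_antidiagonal] at hij
  rw [mul_left_comm]
  exact (two_pow_succ_dvd_two_pow_mul_catalan_mul_choose hk ij.2.succ_ne_zero (by omega)).mul_left _

theorem neg_two_mul_choose_two_add_two_pow_sub_modEq (m : ℕ) {α : ℕ} (hα : α ≠ 0) :
    -2 * (((m + 2 ^ α).choose 2 : ℕ) - (m.choose 2 : ℤ)) ≡ 2 ^ α [ZMOD 2 ^ (α + 1)] := by
  have hchoose : ∀ r : ℕ, ((r.choose 2 : ℕ) : ℤ) * 2 = r * (r - 1) := by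
    rintro (_ | r)
    · simp
    · have h : (r + 1).choose 2 * 2 = (r + 1) * r := by
        simpa [Nat.choose_one_right] using (Nat.add_one_mul_choose_eq r 1).symm
      have hZ := congrArg (Nat.cast : ℕ → ℤ) h
      push_cast at hZ ⊢
      rw [hZ]
      ring
  obtain ⟨β, rfl⟩ : ∃ β, α = β + 1 := ⟨α - 1, by omega⟩
  refine Int.modEq_iff_dvd.2 ⟨m + 2 ^ β, ?_⟩
  have := hchoose (m + 2 ^ (β + 1))
  push_cast at this
  linear_combination this - hchoose m

theorem eval_schroederPoly_eq_sum_range (x : ℤ) {n M : ℕ} (hn : n < M) :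
    (schroederPoly n).eval x =
      ∑ k ∈ range M, ((catalan k * (n + k).choose (2 * k) : ℕ) : ℤ) * x ^ k := by
  rw [eval_eq_sum_range' ((natDegree_schroederPoly_le n).trans_lt hn)]
  simp only [coeff_schroederPoly]

theorem eval_neg_two_schroederPoly_add_two_pow_modEq (n : ℕ) {α : ℕ} (hα : α ≠ 0) :
    (schroederPoly (n + 2 ^ α)).eval (-2) ≡ (schroederPoly n).eval (-2) + 2 ^ α
      [ZMOD 2 ^ (α + 1)] := by
  set N := n + 2 ^ α
  have h2α : 1 ≤ 2 ^ α := Nat.one_le_two_pow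
  have hdiff : (schroederPoly N).eval (-2) - (schroederPoly n).eval (-2) ≡ 2 ^ α
      [ZMOD 2 ^ (α + 1)] := by
    rw [eval_schroederPoly_eq_sum_range _ N.lt_succ_self,
      eval_schroederPoly_eq_sum_range _ (show n < N + 1 by omega), ← sum_sub_distrib]
    refine (Int.sum_modEq_single (a := 1) (fun h => absurd (by simp; omega) h)
      fun k _ hk => ?_).trans ?_
    · rcases k with _ | k
      · simp
      have h := (Int.natCast_modEq_iff.2
        (two_pow_mul_catalan_mul_choose_add_two_pow_modEq (n + (k + 1)) (α := α) (k := k + 1)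
          (by omega))).dvd
      rw [show N + (k + 1) = n + (k + 1) + 2 ^ α by omega]
      refine Int.modEq_zero_iff_dvd.2 ?_
      push_cast at h ⊢
      refine ((h.mul_left ((-1) ^ (k + 1))).neg_right).trans (dvd_of_eq ?_)
      rw [show (-2 : ℤ) = -1 * 2 by norm_num, mul_pow]
      ring
    · rw [show N + 1 = n + 1 + 2 ^ α by omega]
      convert neg_two_mul_choose_two_add_two_pow_sub_modEq (n + 1) hα using 1
      simp only [catalan_one, one_mul, mul_one, pow_one]
      ring
  calc (schroederPoly N).eval (-2) = (schroederPoly n).eval (-2) +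
        ((schroederPoly N).eval (-2) - (schroederPoly n).eval (-2)) := by ring
    _ ≡ (schroederPoly n).eval (-2) + 2 ^ α [ZMOD 2 ^ (α + 1)] := hdiff.add_left _

theorem neg_one_pow_mul_two_pow_modEq (n α : ℕ) :
    (-1) ^ n * 2 ^ α ≡ 2 ^ α [ZMOD 2 ^ (α + 1)] := by
  rcases neg_one_pow_eq_or ℤ n with h | h <;> rw [h]
  · rw [one_mul]
  · exact Int.modEq_iff_dvd.2 ⟨1, by ring⟩

theorem littleSchroeder_stern (n α : ℕ) (hn : 1 ≤ n) (hα : 1 ≤ α) :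
    littleSchroeder (n + 2 ^ α) ≡ littleSchroeder n + 2 ^ α [MOD 2 ^ (α + 1)] := by
  have hα₀ : α ≠ 0 := by omega
  have hsign : (-1 : ℤ) ^ (n + 2 ^ α) = (-1) ^ n := by
    rw [pow_add, (Nat.even_pow.2 ⟨even_two, hα₀⟩).neg_one_pow, mul_one]
  rw [← Int.natCast_modEq_iff]
  push_cast
  rw [littleSchroeder_eq_eval (by positivity), littleSchroeder_eq_eval (by omega), hsign]
  calc (-1) ^ n * (schroederPoly (n + 2 ^ α)).eval (-2)
      ≡ (-1) ^ n * ((schroederPoly n).eval (-2) + 2 ^ α) [ZMOD 2 ^ (α + 1)] :=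
        (eval_neg_two_schroederPoly_add_two_pow_modEq n hα₀).mul_left _
    _ = (-1) ^ n * (schroederPoly n).eval (-2) + (-1) ^ n * 2 ^ α := mul_add _ _ _
    _ ≡ (-1) ^ n * (schroederPoly n).eval (-2) + 2 ^ α [ZMOD 2 ^ (α + 1)] :=
        (neg_one_pow_mul_two_pow_modEq n α).add_left _
end

section
/- For every integer n ≥ 1, the Schröder number S_n is even. -/
/-!
Each summand `C(n,k) C(n+k,k) / (k+1)` equals `C(n+k,2k) Cat_k`, so modulo 2 Lucas' theorem
applies to the binomial factor, while pairing the terms of Segner's recurrence under swapping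
gives `Cat_{2b+1} ≡ Cat_b` and `Cat_{2b+2} ≡ 0`. Splitting the sum by the parity of `k` yields
`S_{2a} ≡ 1 + B_a` and `S_{2a+1} ≡ 1 + B_{a+1}` with `B_n = ∑_{k<n} C(n+k,2k+1) Cat_k`, and the
same splitting gives `B_{2a} ≡ B_a`, `B_{2a+1} ≡ 1`, hence `B_n ≡ 1` for all `n ≥ 1`.
-/

open Finset

theorem CharTwo.sum_eq_sum_filter_fixed {R ι : Type*} [Ring R] [CharP R 2] [DecidableEq ι]
    (s : Finset ι) (f : ι → R) (g : ι → ι) (hs : ∀ a ∈ s, g a ∈ s)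
    (hg : ∀ a ∈ s, g (g a) = a) (hf : ∀ a ∈ s, f (g a) = f a) :
    ∑ a ∈ s, f a = ∑ a ∈ s with g a = a, f a := by
  rw [← sum_filter_add_sum_filter_not s (fun a => g a = a), add_eq_left]
  refine sum_involution (fun a _ => g a) (fun a ha => ?_) (fun a ha _ => (mem_filter.1 ha).2)
    (fun a ha => ?_) (fun a ha => hg a (mem_filter.1 ha).1)
  · rw [hf a (mem_filter.1 ha).1, CharTwo.add_self_eq_zero]
  · obtain ⟨has, hga⟩ := mem_filter.1 ha
    exact mem_filter.2 ⟨hs a has, fun h => hga (by rw [hg a has] at h; exact h.symm)⟩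

theorem Finset.sum_range_two_mul {M : Type*} [AddCommMonoid M] (f : ℕ → M) (n : ℕ) :
    ∑ k ∈ range (2 * n), f k =
      ∑ k ∈ range n, f (2 * k) + ∑ k ∈ range n, f (2 * k + 1) := by
  induction n with
  | zero => simp
  | succ n ih =>
    rw [Nat.mul_succ, sum_range_succ, sum_range_succ, ih, sum_range_succ, sum_range_succ]
    abel

theorem Finset.sum_range_two_mul_add_one {M : Type*} [AddCommMonoid M] (f : ℕ → M) (n : ℕ) :
    ∑ k ∈ range (2 * n + 1), f k =
      ∑ k ∈ range (n + 1), f (2 * k) + ∑ k ∈ range n, f (2 * k + 1) := by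
  rw [sum_range_succ, sum_range_two_mul, sum_range_succ]
  abel

theorem choose_mul_add_mul_add_zmod (p : ℕ) [Fact p.Prime] {a b r s : ℕ} (hr : r < p)
    (hs : s < p) :
    ((p * a + r).choose (p * b + s) : ZMod p) = r.choose s * a.choose b := by
  have hp := (Fact.out : p.Prime).pos
  rw [← Nat.cast_mul, ZMod.natCast_eq_natCast_iff]
  convert Choose.choose_modEq_choose_mod_mul_choose_div_nat (p := p) using 3 <;>
    simp [Nat.mul_add_div hp, Nat.mod_eq_of_lt, Nat.div_eq_of_lt, *]

theorem catalan_succ_zmod_two (n : ℕ) :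
    (catalan (n + 1) : ZMod 2) =
      ∑ x ∈ antidiagonal n with x.swap = x, (catalan x.1 * catalan x.2 : ZMod 2) := by
  rw [catalan_succ', Nat.cast_sum]
  push_cast
  exact CharTwo.sum_eq_sum_filter_fixed _ _ Prod.swap (fun a ha => by simpa [add_comm] using ha)
    (fun a _ => a.swap_swap) (fun a _ => mul_comm _ _)

theorem catalan_two_mul_add_one_zmod_two (n : ℕ) :
    (catalan (2 * n + 1) : ZMod 2) = catalan n := by
  have hfixed : {x ∈ antidiagonal (2 * n) | x.swap = x} = {(n, n)} := by
    ext ⟨i, j⟩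
    simp only [mem_filter, HasAntidiagonal.mem_antidiagonal, Prod.swap_prod_mk, Prod.mk.injEq,
      mem_singleton]
    omega
  rw [catalan_succ_zmod_two, hfixed, sum_singleton, ← pow_two, ZMod.pow_card]

theorem catalan_two_mul_add_two_zmod_two (n : ℕ) : (catalan (2 * n + 2) : ZMod 2) = 0 := by
  have hfixed : {x ∈ antidiagonal (2 * n + 1) | x.swap = x} = ∅ := by
    ext ⟨i, j⟩
    simp only [mem_filter, HasAntidiagonal.mem_antidiagonal, Prod.swap_prod_mk, Prod.mk.injEq,
      notMem_empty, iff_false]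
    omega
  rw [catalan_succ_zmod_two, hfixed, sum_empty]

theorem choose_mul_choose_add_div_succ (n k : ℕ) :
    n.choose k * (n + k).choose k / (k + 1) = (n + k).choose (2 * k) * catalan k := by
  rcases lt_or_ge n k with hnk | hkn
  · simp [Nat.choose_eq_zero_of_lt hnk, Nat.choose_eq_zero_of_lt (by omega : n + k < 2 * k)]
  have hmul : n.choose k * (n + k).choose k = (k + 1) * ((n + k).choose (2 * k) * catalan k) := by
    have hchoose := Nat.choose_mul (n := n + k) (k := 2 * k) (s := k) (by omega)
    rw [Nat.add_sub_cancel, show 2 * k - k = k by omega] at hchoose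
    rw [mul_left_comm, succ_mul_catalan_eq_centralBinom, Nat.centralBinom, hchoose, mul_comm]
  rw [hmul, Nat.mul_div_cancel_left _ k.succ_pos]

theorem choose_two_mul_two_mul_zmod_two (a b : ℕ) :
    ((2 * a).choose (2 * b) : ZMod 2) = a.choose b := by
  simpa using choose_mul_add_mul_add_zmod 2 (a := a) (b := b) (r := 0) (s := 0) two_pos two_pos

theorem choose_two_mul_add_one_two_mul_zmod_two (a b : ℕ) :
    ((2 * a + 1).choose (2 * b) : ZMod 2) = a.choose b := by
  simpa using choose_mul_add_mul_add_zmod 2 (a := a) (b := b) (r := 1) (s := 0) one_lt_two two_pos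

theorem choose_two_mul_two_mul_add_one_zmod_two (a b : ℕ) :
    ((2 * a).choose (2 * b + 1) : ZMod 2) = 0 := by
  simpa using choose_mul_add_mul_add_zmod 2 (a := a) (b := b) (r := 0) (s := 1) two_pos one_lt_two

theorem choose_two_mul_add_one_two_mul_add_one_zmod_two (a b : ℕ) :
    ((2 * a + 1).choose (2 * b + 1) : ZMod 2) = a.choose b := by
  simpa using
    choose_mul_add_mul_add_zmod 2 (a := a) (b := b) (r := 1) (s := 1) one_lt_two one_lt_two

theorem sum_range_succ_mul_catalan_two_mul_zmod_two (f : ℕ → ZMod 2) (m : ℕ) :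
    ∑ b ∈ range (m + 1), f b * catalan (2 * b) = f 0 := by
  simp [sum_range_succ', mul_add, catalan_two_mul_add_two_zmod_two]

theorem schroeder_cast_zmod_two (n : ℕ) :
    (schroeder n : ZMod 2) =
      ∑ k ∈ range (n + 1), ((n + k).choose (2 * k) : ZMod 2) * catalan k := by
  simp [schroeder, choose_mul_choose_add_div_succ]

def oddChooseCatalanSum (n : ℕ) : ZMod 2 :=
  ∑ k ∈ range n, ((n + k).choose (2 * k + 1) : ZMod 2) * catalan k

theorem oddChooseCatalanSum_two_mul (a : ℕ) :
    oddChooseCatalanSum (2 * a) = oddChooseCatalanSum a := by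
  rw [oddChooseCatalanSum, sum_range_two_mul]
  have hzero : ∀ b, ((2 * a + 2 * b).choose (2 * (2 * b) + 1) : ZMod 2) = 0 := fun b => by
    rw [← mul_add, choose_two_mul_two_mul_add_one_zmod_two]
  simp only [hzero, zero_mul, sum_const_zero, zero_add, oddChooseCatalanSum]
  refine sum_congr rfl fun b _ => ?_
  rw [show 2 * a + (2 * b + 1) = 2 * (a + b) + 1 by ring,
    choose_two_mul_add_one_two_mul_add_one_zmod_two, catalan_two_mul_add_one_zmod_two]

theorem oddChooseCatalanSum_two_mul_add_one (a : ℕ) : oddChooseCatalanSum (2 * a + 1) = 1 := by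
  rw [oddChooseCatalanSum, sum_range_two_mul_add_one]
  have hzero : ∀ b, ((2 * a + 1 + (2 * b + 1)).choose (2 * (2 * b + 1) + 1) : ZMod 2) = 0 :=
    fun b => by
      rw [show 2 * a + 1 + (2 * b + 1) = 2 * (a + b + 1) by ring,
        choose_two_mul_two_mul_add_one_zmod_two]
  simp only [hzero, zero_mul, sum_const_zero, add_zero,
    sum_range_succ_mul_catalan_two_mul_zmod_two]
  simpa using choose_two_mul_add_one_two_mul_add_one_zmod_two a 0

theorem oddChooseCatalanSum_eq_one {n : ℕ} (hn : 1 ≤ n) : oddChooseCatalanSum n = 1 := by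
  induction n using Nat.strong_induction_on with
  | _ n ih =>
    obtain ⟨a, rfl | rfl⟩ := Nat.even_or_odd' n
    · rw [oddChooseCatalanSum_two_mul]
      exact ih a (by omega) (by omega)
    · exact oddChooseCatalanSum_two_mul_add_one a

theorem schroeder_two_mul_zmod_two (a : ℕ) :
    (schroeder (2 * a) : ZMod 2) = 1 + oddChooseCatalanSum a := by
  rw [schroeder_cast_zmod_two, sum_range_two_mul_add_one]
  simp only [sum_range_succ_mul_catalan_two_mul_zmod_two, mul_zero, add_zero,
    Nat.choose_zero_right, Nat.cast_one, oddChooseCatalanSum]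
  refine congrArg _ (sum_congr rfl fun b _ => ?_)
  rw [show 2 * a + (2 * b + 1) = 2 * (a + b) + 1 by ring,
    choose_two_mul_add_one_two_mul_zmod_two, catalan_two_mul_add_one_zmod_two]

theorem schroeder_two_mul_add_one_zmod_two (a : ℕ) :
    (schroeder (2 * a + 1) : ZMod 2) = 1 + oddChooseCatalanSum (a + 1) := by
  rw [schroeder_cast_zmod_two, show 2 * a + 1 + 1 = 2 * (a + 1) by ring, sum_range_two_mul]
  simp only [sum_range_succ_mul_catalan_two_mul_zmod_two, mul_zero, add_zero,
    Nat.choose_zero_right, Nat.cast_one, oddChooseCatalanSum]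
  refine congrArg _ (sum_congr rfl fun b _ => ?_)
  rw [show 2 * a + 1 + (2 * b + 1) = 2 * (a + 1 + b) by ring,
    choose_two_mul_two_mul_zmod_two, catalan_two_mul_add_one_zmod_two]

theorem schroeder_even (n : ℕ) (hn : 1 ≤ n) : Even (schroeder n) := by
  rw [even_iff_two_dvd, ← ZMod.natCast_eq_zero_iff]
  obtain ⟨a, rfl | rfl⟩ := Nat.even_or_odd' n
  · rw [schroeder_two_mul_zmod_two, oddChooseCatalanSum_eq_one (by omega)]; decide
  · rw [schroeder_two_mul_add_one_zmod_two, oddChooseCatalanSum_eq_one (by omega)]; decide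
end

section
/- For every integer n ≥ 1, ∑_{k=1}^n (1/n)·C(n,k)·C(n,k-1)·2^k = ∑_{k=0}^n C(n+k,2k)·C(2k,k)/(k+1); equivalently, S_n = ∑_{k=1}^n (1/n)·C(n,k)·C(n,k-1)·2^k. -/
open Finset

theorem choose_mul_choose_add_eq (n k : ℕ) :
    (n + k).choose (2 * k) * (2 * k).choose k = n.choose k * (n + k).choose k := by
  rcases le_or_gt k n with hkn | hnk
  · rw [Nat.choose_mul (by omega), Nat.add_sub_cancel, show 2 * k - k = k by omega, mul_comm]
  · rw [Nat.choose_eq_zero_of_lt hnk, Nat.choose_eq_zero_of_lt (by omega), zero_mul, zero_mul]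

theorem sum_range_choose_mul_choose (m i : ℕ) :
    ∑ j ∈ range (m + 1), m.choose j * j.choose i = m.choose i * 2 ^ (m - i) := by
  rcases le_or_gt i m with him | hmi
  · have hsplit : m + 1 = i + (m - i + 1) := by omega
    rw [hsplit, sum_range_add, sum_eq_zero fun j hj =>
      by rw [Nat.choose_eq_zero_of_lt (mem_range.mp hj), mul_zero], zero_add,
      ← Nat.sum_range_choose (m - i), mul_sum]
    refine sum_congr rfl fun t _ => ?_
    rw [Nat.choose_mul (by omega), Nat.add_sub_cancel_left]
  · rw [Nat.choose_eq_zero_of_lt hmi, zero_mul]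
    refine sum_eq_zero fun j hj => ?_
    rw [Nat.choose_eq_zero_of_lt (show j < i by simp only [mem_range] at hj; omega), mul_zero]

theorem add_choose_succ_eq_sum (N k : ℕ) :
    (N + k).choose (k + 1) = ∑ l ∈ range (k + 1), N.choose (l + 1) * k.choose l := by
  rw [Nat.add_choose_eq, Nat.sum_antidiagonal_eq_sum_range_succ_mk, sum_range_succ']
  simp only [Nat.sub_zero, Nat.choose_succ_self, mul_zero, add_zero, Nat.add_sub_add_right]
  refine sum_congr rfl fun l hl => ?_
  rw [Nat.choose_symm (by simp only [mem_range] at hl; omega)]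

theorem sum_choose_mul_add_choose_succ (n : ℕ) :
    ∑ i ∈ range (n + 1), n.choose i * (n + i).choose (i + 1)
      = ∑ l ∈ range (n + 1), n.choose (l + 1) * n.choose l * 2 ^ (n - l) := by
  have hvdm : ∀ i ∈ range (n + 1),
      (n + i).choose (i + 1) = ∑ l ∈ range (n + 1), n.choose (l + 1) * i.choose l := by
    intro i hi
    rw [add_choose_succ_eq_sum]
    refine sum_subset (range_subset_range.mpr (by simp only [mem_range] at hi; omega))
      fun l _ hl => ?_
    rw [Nat.choose_eq_zero_of_lt (show i < l by simp only [mem_range] at hl; omega), mul_zero]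
  rw [sum_congr rfl fun i hi => congrArg _ (hvdm i hi)]
  simp only [mul_sum]
  rw [sum_comm]
  refine sum_congr rfl fun l _ => ?_
  rw [mul_assoc, ← sum_range_choose_mul_choose, mul_sum]
  exact sum_congr rfl fun i _ => by ring

theorem sum_Icc_choose_mul_choose_sub_one_mul_two_pow (n : ℕ) :
    ∑ k ∈ Icc 1 n, n.choose k * n.choose (k - 1) * 2 ^ k
      = ∑ i ∈ range (n + 1), n.choose i * (n + i).choose (i + 1) := by
  rw [sum_choose_mul_add_choose_succ, sum_range_succ, Nat.choose_succ_self, zero_mul, zero_mul,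
    add_zero]
  refine sum_nbij' (n - ·) (n - ·)
    (by intro k hk; simp only [mem_Icc, mem_range] at hk ⊢; omega)
    (by intro l hl; simp only [mem_Icc, mem_range] at hl ⊢; omega)
    (by intro k hk; simp only [mem_Icc] at hk; omega)
    (by intro l hl; simp only [mem_range] at hl; omega) fun k hk => ?_
  simp only [mem_Icc] at hk
  rw [show n - k + 1 = n - (k - 1) by omega, Nat.choose_symm (by omega),
    Nat.choose_symm (by omega), show n - (n - k) = k by omega, mul_comm (n.choose k)]

theorem cast_schroeder (n : ℕ) :
    (schroeder n : ℚ)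
      = ∑ k ∈ range (n + 1), (n.choose k * (n + k).choose k : ℚ) / (k + 1) := by
  rw [schroeder, Nat.cast_sum]
  refine sum_congr rfl fun k _ => ?_
  have hdvd : k + 1 ∣ n.choose k * (n + k).choose k :=
    choose_mul_choose_add_eq n k ▸ dvd_mul_of_dvd_right (Nat.succ_dvd_centralBinom k) _
  rw [Nat.cast_div hdvd (by positivity)]
  push_cast
  rfl

theorem sum_Icc_choose_mul_choose_sub_one_mul_two_pow_div (n : ℕ) (hn : n ≠ 0) :
    ∑ k ∈ Icc 1 n, (1 / (n : ℚ)) * n.choose k * n.choose (k - 1) * 2 ^ k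
      = ∑ k ∈ range (n + 1), (n.choose k * (n + k).choose k : ℚ) / (k + 1) := by
  have habsorb : ∀ k, ((n + k).choose (k + 1) : ℚ) * (k + 1) = (n + k).choose k * n := by
    intro k
    exact_mod_cast (Nat.choose_succ_right_eq (n + k) k).trans (by rw [Nat.add_sub_cancel])
  calc ∑ k ∈ Icc 1 n, (1 / (n : ℚ)) * n.choose k * n.choose (k - 1) * 2 ^ k
      = (1 / n) * ((∑ k ∈ Icc 1 n, n.choose k * n.choose (k - 1) * 2 ^ k : ℕ) : ℚ) := by
        push_cast
        rw [mul_sum]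
        exact sum_congr rfl fun k _ => by ring
    _ = (1 / n) * ∑ k ∈ range (n + 1), (n.choose k * (n + k).choose (k + 1) : ℚ) := by
        rw [sum_Icc_choose_mul_choose_sub_one_mul_two_pow]
        push_cast
        rfl
    _ = _ := by
        rw [mul_sum]
        refine sum_congr rfl fun k _ => ?_
        field_simp
        rw [mul_assoc, habsorb]
        ring

theorem schroeder_second_form (n : ℕ) (hn : 1 ≤ n) :
    (∑ k ∈ Finset.Icc 1 n, (1 / (n : ℚ)) * n.choose k * n.choose (k - 1) * 2 ^ k
        = ∑ k ∈ Finset.range (n + 1), ((n + k).choose (2 * k) * (2 * k).choose k : ℚ) / (k + 1))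
      ∧ (schroeder n : ℚ)
        = ∑ k ∈ Finset.Icc 1 n, (1 / (n : ℚ)) * n.choose k * n.choose (k - 1) * 2 ^ k := by
  have hnarayana := sum_Icc_choose_mul_choose_sub_one_mul_two_pow_div n (by omega)
  have htrinomial :
      ∑ k ∈ range (n + 1), ((n + k).choose (2 * k) * (2 * k).choose k : ℚ) / (k + 1)
        = ∑ k ∈ range (n + 1), (n.choose k * (n + k).choose k : ℚ) / (k + 1) :=
    sum_congr rfl fun k _ => by
      exact_mod_cast congrArg (fun x : ℕ => (x : ℚ) / (k + 1)) (choose_mul_choose_add_eq n k)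
  exact ⟨hnarayana.trans htrinomial.symm, (cast_schroeder n).trans hnarayana.symm⟩
end

section
/- For all integers n ≥ 1 and 1 ≤ k ≤ n, the number T(n,k) = (1/n)·C(n,k)·C(n,k-1)·2^k is an integer divisible by 2^k. -/
/-- `T n k = (1/n)·C(n,k)·C(n,k-1)·2^k`, which is `2^k` times the Narayana number.
The natural division is exact since `n ∣ C(n,k)·C(n,k-1)`. -/
def T (n k : ℕ) : ℕ := n.choose k * n.choose (k - 1) * 2 ^ k / n

theorem Nat.dvd_of_dvd_mul_of_dvd_mul_of_add_eq_add_one {n a b P : ℕ} (hab : a + b = n + 1)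
    (ha : n ∣ a * P) (hb : n ∣ b * P) : n ∣ P := by
  have hsum : n ∣ n * P + P := by
    rw [← add_one_mul, ← hab, add_mul]
    exact dvd_add ha hb
  exact (Nat.dvd_add_right (dvd_mul_right n P)).mp hsum

/-- Both `(k+1)·C(n,k+1) = n·C(n-1,k)` and
`(n-k)·C(n,k) = (k+1)·C(n,k+1)` make a factor `n` appear, and `(k+1) + (n-k) = n+1`. -/
theorem Nat.dvd_choose_succ_mul_choose (n k : ℕ) : n ∣ n.choose (k + 1) * n.choose k := by
  rcases lt_or_ge n (k + 1) with hlt | hle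
  · simp [Nat.choose_eq_zero_of_lt hlt]
  obtain ⟨m, rfl⟩ := Nat.exists_eq_add_of_le' (Nat.one_le_of_lt hle)
  have hpascal := Nat.add_one_mul_choose_eq m k
  have hratio := Nat.choose_succ_right_eq (m + 1) k
  refine Nat.dvd_of_dvd_mul_of_dvd_mul_of_add_eq_add_one (a := k + 1) (b := m + 1 - k)
    (by omega) ⟨m.choose k * (m + 1).choose k, ?_⟩
    ⟨(m + 1).choose (k + 1) * m.choose k, ?_⟩
  · calc (k + 1) * ((m + 1).choose (k + 1) * (m + 1).choose k)
        = (m + 1).choose (k + 1) * (k + 1) * (m + 1).choose k := by ring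
      _ = (m + 1) * (m.choose k * (m + 1).choose k) := by rw [← hpascal, mul_assoc]
  · calc (m + 1 - k) * ((m + 1).choose (k + 1) * (m + 1).choose k)
        = (m + 1).choose (k + 1) * ((m + 1).choose k * (m + 1 - k)) := by ring
      _ = (m + 1) * ((m + 1).choose (k + 1) * m.choose k) := by
        rw [← hratio, ← hpascal]; ring

theorem T_integer_and_div_general (n k : ℕ) (hk : 1 ≤ k) :
    n ∣ n.choose k * n.choose (k - 1) * 2 ^ k ∧ 2 ^ k ∣ T n k := by
  have hdvd : n ∣ n.choose k * n.choose (k - 1) := by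
    obtain ⟨j, rfl⟩ := Nat.exists_eq_add_of_le' hk
    simpa using Nat.dvd_choose_succ_mul_choose n j
  refine ⟨hdvd.mul_right _, ?_⟩
  rw [T, Nat.mul_div_right_comm hdvd]
  exact dvd_mul_left _ _

theorem T_integer_and_div (n k : ℕ) (hn : 1 ≤ n) (hk : 1 ≤ k) (hkn : k ≤ n) :
    n ∣ n.choose k * n.choose (k - 1) * 2 ^ k ∧ 2 ^ k ∣ T n k :=
  T_integer_and_div_general n k hk
end

section
/- For all integers n ≥ 3 and α ≥ 1, T(n+2^α, 3) ≡ T(n, 3) + (n−1)·2^{α+2} + 2^{2α+1} (mod 2^{α+3}). -/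
/-! With `y = n - 1` one has `3·T(n,3) = 2n(n-1)²(n-2) = 2y⁴ - 2y²`. Expanding this quartic at
`y + 2^α`, everything beyond `3·((n-1)·2^(α+2) + 2^(2α+1))` is divisible by `2^(α+3)` as soon
as `2^α` is even. Since `3` is a unit modulo a power of two, the congruence for `3·T` gives the
one for `T`. -/

section CastChoose

variable {R : Type*} [CommRing R]

theorem Nat.cast_descFactorial_three (n : ℕ) :
    (n.descFactorial 3 : R) = n * (n - 1) * (n - 2) := by
  rcases n with _ | _ | _ | m <;> simp [Nat.descFactorial]
  ring

theorem two_mul_cast_choose_two (n : ℕ) : (2 : R) * n.choose 2 = n * (n - 1) := by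
  rw [← Nat.cast_descFactorial_two, Nat.descFactorial_eq_factorial_mul_choose]
  norm_num

theorem six_mul_cast_choose_three (n : ℕ) : (6 : R) * n.choose 3 = n * (n - 1) * (n - 2) := by
  rw [← Nat.cast_descFactorial_three, Nat.descFactorial_eq_factorial_mul_choose]
  norm_num [Nat.factorial]

end CastChoose

theorem T_three_eq (n : ℕ) : (T n 3 : ℤ) = 4 * (n - 1) * n.choose 3 := by
  rcases eq_or_ne n 0 with rfl | hn
  · simp [T]
  have hnum : (n.choose 3 * n.choose 2 * 8 : ℤ) = n * (4 * (n - 1) * n.choose 3) := by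
    linear_combination (4 * n.choose 3 : ℤ) * two_mul_cast_choose_two (R := ℤ) n
  rw [T, Int.natCast_div]
  push_cast
  rw [hnum, Int.mul_ediv_cancel_left _ (by exact_mod_cast hn)]

theorem three_mul_T_three (n : ℕ) :
    3 * (T n 3 : ℤ) = 2 * n * (n - 1) ^ 2 * (n - 2) := by
  rw [T_three_eq]
  linear_combination (2 * (n - 1) : ℤ) * six_mul_cast_choose_three (R := ℤ) n

theorem T_three_shift_general (n α : ℕ) (hα : 1 ≤ α) :
    (T (n + 2 ^ α) 3 : ℤ)
      ≡ (T n 3 : ℤ) + ((n : ℤ) - 1) * 2 ^ (α + 2) + 2 ^ (2 * α + 1) [ZMOD 2 ^ (α + 3)] := by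
  obtain ⟨β, rfl⟩ := Nat.exists_eq_add_of_le' hα
  have hcop : IsCoprime ((2 : ℤ) ^ (β + 1 + 3)) 3 := (by norm_num : IsCoprime (2 : ℤ) 3).pow_left
  refine Int.modEq_iff_dvd.mpr (hcop.dvd_of_dvd_mul_left ?_)
  set c : ℤ := 2 ^ β
  set y : ℤ := n - 1
  have hshift := three_mul_T_three (n + 2 ^ (β + 1))
  have hbase := three_mul_T_three n
  refine ⟨-(y ^ 3 + 3 * c * y ^ 2 + 4 * c ^ 2 * y + 2 * c ^ 3 - 2 * y - 2 * c), ?_⟩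
  push_cast at hshift
  linear_combination hbase - hshift

theorem T_three_shift (n α : ℕ) (hn : 3 ≤ n) (hα : 1 ≤ α) :
    (T (n + 2 ^ α) 3 : ℤ)
      ≡ (T n 3 : ℤ) + ((n : ℤ) - 1) * 2 ^ (α + 2) + 2 ^ (2 * α + 1) [ZMOD 2 ^ (α + 3)] :=
  T_three_shift_general n α hα
end

section
/- For all integers n ≥ 0, α ≥ 1, and 1 ≤ k ≤ 2^α, one has C(n+2^α, k) ≡ C(n, k) (mod 2^{α−⌊log₂ k⌋}). -/
/-!
By Vandermonde, `C(n + p^α, k) = C(n, k) + ∑_{0 < j ≤ k} C(p^α, j) C(n, k - j)`. By Kummer's theorem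
the `p`-adic valuation of `C(p^α, j)` is `α - v_p(j)` for `0 < j ≤ p^α` (and `C(p^α, j) = 0` for
larger `j`), while `v_p(j) ≤ log_p j ≤ log_p k`; so `p^(α - log_p k)` divides every term of the sum.
-/

namespace Nat

theorem choose_add_modEq_of_forall_dvd {m n k q : ℕ} (h : ∀ j, j ≠ 0 → j ≤ k → q ∣ m.choose j) :
    (n + m).choose k ≡ n.choose k [MOD q] := by
  have hsum : q ∣ ∑ j ∈ Finset.range k, m.choose (j + 1) * n.choose (k - (j + 1)) :=
    Finset.dvd_sum fun j hj =>
      (h (j + 1) j.succ_ne_zero (Finset.mem_range.mp hj)).mul_right _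
  rw [add_comm, add_choose_eq, Finset.Nat.sum_antidiagonal_eq_sum_range_succ_mk,
    Finset.sum_range_succ']
  simpa only [choose_zero_right, one_mul, Nat.sub_zero, zero_add] using
    (modEq_zero_iff_dvd.mpr hsum).add_right (n.choose k)

theorem Prime.pow_sub_log_dvd_choose_prime_pow {p α j k : ℕ} (hp : p.Prime) (hj : j ≠ 0)
    (hjk : j ≤ k) : p ^ (α - log p k) ∣ (p ^ α).choose j := by
  rcases le_or_gt j (p ^ α) with hjα | hjα
  · rw [hp.pow_dvd_iff_le_factorization (choose_pos hjα).ne',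
      factorization_choose_prime_pow hp hjα hj, factorization_def j hp]
    exact Nat.sub_le_sub_left ((padicValNat_le_nat_log j).trans (log_mono_right hjk)) α
  · simp [choose_eq_zero_of_lt hjα]

theorem Prime.choose_add_prime_pow_modEq {p : ℕ} (hp : p.Prime) (n α k : ℕ) :
    (n + p ^ α).choose k ≡ n.choose k [MOD p ^ (α - log p k)] :=
  choose_add_modEq_of_forall_dvd fun _ hj hjk => hp.pow_sub_log_dvd_choose_prime_pow hj hjk

end Nat

theorem choose_shift_mod_general (n α k : ℕ) :
    (n + 2 ^ α).choose k ≡ n.choose k [MOD 2 ^ (α - Nat.log 2 k)] :=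
  Nat.prime_two.choose_add_prime_pow_modEq n α k

theorem choose_shift_mod (n α k : ℕ) (hα : 1 ≤ α) (hk : 1 ≤ k) (hk' : k ≤ 2 ^ α) :
    (n + 2 ^ α).choose k ≡ n.choose k [MOD 2 ^ (α - Nat.log 2 k)] :=
  choose_shift_mod_general n α k
end

section
/- For all integers n ≥ 1, α ≥ 1, and 1 ≤ k ≤ 2^α with k ≤ n, one has T(n+2^α, k) ≡ T(n, k) (mod 2^{α+k−⌊log₂ k⌋}). -/
/-! The determinant formula `T (N+1) (j+2) = 2^(j+2) (C(N,j+1)² - C(N,j+2) C(N,j))` writes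
`T n k` as `2^k` times a polynomial in binomial coefficients `C(N, i)` with `i ≤ k`. By
Vandermonde, `C(N + 2^α, i) - C(N, i) = ∑_{b ≥ 1} C(2^α, b) C(N, i - b)`, and `2^(α - v₂ b)`
divides `C(2^α, b)` because `b C(2^α, b) = 2^α C(2^α - 1, b - 1)`. As `v₂ b ≤ ⌊log₂ k⌋`, every
`C(N, i)` is unchanged modulo `2^(α - ⌊log₂ k⌋)` by `N ↦ N + 2^α`, and `2^k` supplies the rest. -/

theorem pow_sub_factorization_dvd_choose_prime_pow {p α b : ℕ} (hp : p.Prime) (hb : b ≠ 0)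
    (hbp : b ≤ p ^ α) : p ^ (α - b.factorization p) ∣ (p ^ α).choose b := by
  have hchoose : (p ^ α).choose b ≠ 0 := (Nat.choose_pos hbp).ne'
  obtain ⟨b', rfl⟩ := Nat.exists_eq_succ_of_ne_zero hb
  have hdvd : p ^ α ∣ (p ^ α).choose (b' + 1) * (b' + 1) := by
    obtain ⟨q, hq⟩ : ∃ q, p ^ α = q + 1 := Nat.exists_eq_succ_of_ne_zero (pow_pos hp.pos α).ne'
    rw [hq, ← Nat.add_one_mul_choose_eq]
    exact dvd_mul_right _ _
  have hle := (hp.pow_dvd_iff_le_factorization (mul_ne_zero hchoose b'.succ_ne_zero)).mp hdvd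
  rw [Nat.factorization_mul hchoose b'.succ_ne_zero, Finsupp.add_apply] at hle
  exact (hp.pow_dvd_iff_le_factorization hchoose).mpr (by omega)

theorem pow_sub_log_dvd_choose_prime_pow {p α b k : ℕ} (hp : p.Prime) (hb : b ≠ 0)
    (hbk : b ≤ k) (hk : k ≤ p ^ α) : p ^ (α - Nat.log p k) ∣ (p ^ α).choose b := by
  refine (Nat.pow_dvd_pow p ?_).trans
    (pow_sub_factorization_dvd_choose_prime_pow hp hb (hbk.trans hk))
  have hpow : p ^ b.factorization p ≤ k := (Nat.ordProj_le p hb).trans hbk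
  have hlog := Nat.le_log_of_pow_le hp.one_lt hpow
  omega

theorem choose_add_prime_pow_modEq {p α j k : ℕ} (n : ℕ) (hp : p.Prime) (hjk : j ≤ k)
    (hk : k ≤ p ^ α) : (n + p ^ α).choose j ≡ n.choose j [MOD p ^ (α - Nat.log p k)] := by
  rw [add_comm, Nat.add_choose_eq, Finset.Nat.sum_antidiagonal_eq_sum_range_succ_mk,
    Finset.sum_range_succ', Nat.choose_zero_right, one_mul, Nat.sub_zero]
  refine ((Nat.modEq_iff_dvd' (Nat.le_add_left _ _)).mpr ?_).symm
  rw [Nat.add_sub_cancel]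
  refine Finset.dvd_sum fun i hi => ?_
  have hi : i < j := Finset.mem_range.mp hi
  exact (pow_sub_log_dvd_choose_prime_pow hp i.succ_ne_zero (by omega) hk).mul_right _

theorem succ_choose_mul_succ_choose (N j : ℕ) :
    ((N + 1).choose (j + 2) * (N + 1).choose (j + 1) : ℤ)
      = (N + 1) * (N.choose (j + 1) ^ 2 - N.choose (j + 2) * N.choose j) := by
  rcases le_or_gt N j with hNj | hjN
  · simp [Nat.choose_eq_zero_of_lt (by omega : N < j + 1),
      Nat.choose_eq_zero_of_lt (by omega : N < j + 2),
      Nat.choose_eq_zero_of_lt (by omega : N + 1 < j + 2)]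
  obtain ⟨d, rfl⟩ : ∃ d, N = j + 1 + d := ⟨N - (j + 1), by omega⟩
  have h1 := Nat.choose_succ_right_eq (j + 1 + d) (j + 1)
  have h2 := Nat.choose_succ_right_eq (j + 1 + d) j
  rw [show j + 1 + d - (j + 1) = d by omega] at h1
  rw [show j + 1 + d - j = d + 1 by omega] at h2
  rw [Nat.choose_succ_succ' _ (j + 1), Nat.choose_succ_succ' _ j]
  set A := (j + 1 + d).choose (j + 1)
  set B := (j + 1 + d).choose (j + 2)
  set C := (j + 1 + d).choose j
  have h1' : (B * (j + 2) : ℤ) = A * d := by exact_mod_cast h1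
  have h2' : (A * (j + 1) : ℤ) = C * (d + 1) := by exact_mod_cast h2
  push_cast
  -- cancelling `(j + 2) (d + 1)` makes the identity follow from the ratio relations `h1'`, `h2'`
  apply mul_left_cancel₀ (by positivity : ((j : ℤ) + 2) * ((d : ℤ) + 1) ≠ 0)
  linear_combination ((d + 1) * A + (j + d + 3) * (d + 1) * C) * h1'
    - (A * (j + 2) + (j + d + 3) * d * A) * h2'

theorem T_succ_add_two (N j : ℕ) :
    (T (N + 1) (j + 2) : ℤ)
      = 2 ^ (j + 2) * (N.choose (j + 1) ^ 2 - N.choose (j + 2) * N.choose j) := by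
  rw [T, Int.natCast_div, show j + 2 - 1 = j + 1 from rfl]
  push_cast
  rw [succ_choose_mul_succ_choose, mul_assoc, Int.mul_ediv_cancel_left _ (by positivity), mul_comm]

theorem T_succ_one (N : ℕ) : T (N + 1) 1 = 2 := by
  simp [T]

theorem T_shift_mod_general (n α k : ℕ) (hn : 1 ≤ n) (hk : 1 ≤ k)
    (hk2 : k ≤ 2 ^ α) :
    T (n + 2 ^ α) k ≡ T n k [MOD 2 ^ (α + k - Nat.log 2 k)] := by
  obtain ⟨N, rfl⟩ : ∃ N, n = N + 1 := ⟨n - 1, by omega⟩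
  obtain rfl | ⟨j, rfl⟩ : k = 1 ∨ ∃ j, k = j + 2 := by
    rcases k with _ | _ | j <;> simp_all
  · rw [add_right_comm, T_succ_one, T_succ_one]
  have hlog : Nat.log 2 (j + 2) ≤ α := by
    simpa using Nat.log_mono_right (b := 2) hk2
  set e := α - Nat.log 2 (j + 2)
  have hchoose : ∀ i ≤ j + 2, ((N + 2 ^ α).choose i : ℤ) ≡ N.choose i [ZMOD 2 ^ e] := fun i hi => by
    exact_mod_cast Int.natCast_modEq_iff.mpr (choose_add_prime_pow_modEq N Nat.prime_two hi hk2)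
  rw [← Int.natCast_modEq_iff, add_right_comm, T_succ_add_two, T_succ_add_two,
    show α + (j + 2) - Nat.log 2 (j + 2) = (j + 2) + e by omega]
  push_cast
  rw [pow_add]
  exact (((hchoose _ (by omega)).pow 2).sub
    ((hchoose _ le_rfl).mul (hchoose _ (by omega)))).mul_left'

theorem T_shift_mod (n α k : ℕ) (hn : 1 ≤ n) (hα : 1 ≤ α) (hk : 1 ≤ k)
    (hk2 : k ≤ 2 ^ α) (hkn : k ≤ n) :
    T (n + 2 ^ α) k ≡ T n k [MOD 2 ^ (α + k - Nat.log 2 k)] :=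
  T_shift_mod_general n α k hn hk hk2
end

section
/- For all integers n ≥ 0 and α ≥ 2, C(n+2^α, 4) ≡ C(n, 4) + 2^{α−2} (mod 2^{α−1}). -/
/-! Write `n + 2^α` and expand by Vandermonde's identity
`C(n + m, 4) = ∑_{i+j=4} C(n, i) C(m, j)` with `m = 2^α`. The mixed terms vanish modulo
`2^(α-1)`, because `m ∣ j · C(m, j)` and `j ∣ 6` for `0 < j < 4`, while
`3 · C(4t, 4) = t (4t - 1)(2t - 1)(4t - 3)` with `t = 2^(α-2)` gives
`C(2^α, 4) ≡ 2^(α-2) (mod 2^(α-1))`, the odd factor being congruent to `3` modulo `2`. -/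

theorem Nat.add_choose_modEq_add_of_dvd {d m k : ℕ} (hk : 0 < k)
    (hd : ∀ j, 0 < j → j < k → d ∣ m.choose j) (n : ℕ) :
    (n + m).choose k ≡ n.choose k + m.choose k [MOD d] := by
  rw [← ZMod.natCast_eq_natCast_iff, Nat.add_choose_eq]
  push_cast
  rw [Finset.sum_eq_add_of_mem (k, 0) (0, k) (by simp) (by simp) (by simp; omega)]
  · simp
  · rintro ⟨i, j⟩ hij ⟨hi, hj⟩
    rw [Finset.HasAntidiagonal.mem_antidiagonal] at hij
    simp only [ne_eq, Prod.mk.injEq] at hi hj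
    rw [(ZMod.natCast_eq_zero_iff _ _).2 (hd j (by omega) (by omega)), mul_zero]

theorem Nat.dvd_choose_mul (m j : ℕ) : m ∣ m.choose j * j := by
  rcases m with _ | m
  · rcases j with _ | j <;> simp
  rcases j with _ | j
  · simp
  exact ⟨_, (Nat.add_one_mul_choose_eq m j).symm⟩

theorem two_pow_succ_dvd_choose (β : ℕ) {j : ℕ} (hj0 : 0 < j) (hj : j < 4) :
    2 ^ (β + 1) ∣ (2 ^ (β + 2)).choose j := by
  have hj6 : j ∣ 6 := by interval_cases j <;> decide
  have h6 := (Nat.dvd_choose_mul (2 ^ (β + 2)) j).trans (mul_dvd_mul_left _ hj6)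
  rw [pow_succ 2 (β + 1)] at h6 ⊢
  rw [show ∀ c, c * 6 = 3 * c * 2 by intro c; ring, Nat.mul_dvd_mul_iff_right two_pos] at h6
  exact (Nat.Coprime.pow_left _ (by decide)).dvd_of_dvd_mul_left h6

theorem cast_choose_four_add_four (k : ℕ) :
    (24 * (k + 4).choose 4 : ℤ) = (k + 4) * (k + 3) * (k + 2) * (k + 1) := by
  have h := Nat.descFactorial_eq_factorial_mul_choose (k + 4) 4
  simp only [Nat.descFactorial_succ, Nat.descFactorial_zero, Nat.factorial] at h
  have h' := congrArg (Nat.cast : ℕ → ℤ) h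
  push_cast at h'
  linear_combination -h'

theorem three_mul_cast_choose_four_four_mul (t : ℕ) :
    (3 * (4 * t).choose 4 : ℤ) = t * (4 * t - 1) * (2 * t - 1) * (4 * t - 3) := by
  rcases t with _ | t
  · simp
  have h := cast_choose_four_add_four (4 * t)
  rw [show 4 * (t + 1) = 4 * t + 4 by ring]
  push_cast at h ⊢
  refine mul_left_cancel₀ (by norm_num : (8 : ℤ) ≠ 0) ?_
  linear_combination h

theorem choose_four_two_pow_modEq (β : ℕ) :
    (2 ^ (β + 2)).choose 4 ≡ 2 ^ β [MOD 2 ^ (β + 1)] := by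
  rw [Nat.modEq_iff_dvd, show 2 ^ (β + 2) = 4 * 2 ^ β by ring, pow_succ]
  have h := three_mul_cast_choose_four_four_mul (2 ^ β)
  push_cast at h ⊢
  set t : ℤ := 2 ^ β
  have h3 : t * 2 ∣ (t - ((4 * 2 ^ β : ℕ).choose 4 : ℤ)) * 3 :=
    ⟨-(16 * t ^ 3 - 24 * t ^ 2 + 11 * t - 3), by linear_combination -h⟩
  have hcop : IsCoprime (t * 2) 3 := (IsCoprime.pow_left (by norm_num)).mul_left (by norm_num)
  exact hcop.dvd_of_dvd_mul_right h3

theorem choose_four_shift (n α : ℕ) (hα : 2 ≤ α) :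
    (n + 2 ^ α).choose 4 ≡ n.choose 4 + 2 ^ (α - 2) [MOD 2 ^ (α - 1)] := by
  obtain ⟨β, rfl⟩ : ∃ β, α = β + 2 := ⟨α - 2, by omega⟩
  rw [Nat.add_sub_cancel, show β + 2 - 1 = β + 1 by omega]
  exact (Nat.add_choose_modEq_add_of_dvd (by norm_num)
    (fun _ hj0 hj => two_pow_succ_dvd_choose β hj0 hj) n).trans
    ((choose_four_two_pow_modEq β).add_left _)
end

section
/- For all integers n ≥ 4 and α ≥ 2, ∑_{k=1}^{4} T(n+2^α, k) ≡ ∑_{k=1}^{4} T(n, k) + (−1)^{⌊(n−1)/2⌋}·2^{α+1} (mod 2^{α+3}). -/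
-- `(k+1)·X` and `(n+1-k)·X` are multiples of `n+1` that add up to `(n+2)·X`.
theorem Nat.succ_dvd_choose_succ_mul_choose (n k : ℕ) :
    n + 1 ∣ (n + 1).choose (k + 1) * (n + 1).choose k := by
  rcases lt_or_ge n k with hnk | hkn
  · simp [Nat.choose_eq_zero_of_lt (by omega : n + 1 < k + 1)]
  have e1 := Nat.add_one_mul_choose_eq n k
  have e2 := Nat.choose_succ_right_eq (n + 1) k
  have hleft : n + 1 ∣ (k + 1) * ((n + 1).choose (k + 1) * (n + 1).choose k) :=
    Dvd.intro (n.choose k * (n + 1).choose k) (by rw [← mul_assoc, e1]; ring)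
  have hright : n + 1 ∣ (n + 1 - k) * ((n + 1).choose (k + 1) * (n + 1).choose k) :=
    Dvd.intro (n.choose k * (n + 1).choose (k + 1)) (by rw [← mul_assoc, e1, e2]; ring)
  have hsum : n + 1 ∣ (n + 2) * ((n + 1).choose (k + 1) * (n + 1).choose k) := by
    have := Nat.dvd_add hleft hright
    rwa [← add_mul, show k + 1 + (n + 1 - k) = n + 2 by omega] at this
  exact (Nat.coprime_self_add_right.mpr (Nat.coprime_one_right _)).dvd_of_dvd_mul_left hsum

theorem mul_T_eq {n k : ℕ} (hk : 0 < k) :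
    n * T n k = n.choose k * n.choose (k - 1) * 2 ^ k := by
  refine Nat.mul_div_cancel' (Dvd.dvd.mul_right ?_ _)
  obtain ⟨k, rfl⟩ := Nat.exists_eq_add_of_lt hk
  rcases n with _ | n
  · simp
  simpa using Nat.succ_dvd_choose_succ_mul_choose n k

def sumPoly (x : ℤ) : ℤ := 18 + 18 * x * (x - 1) + 6 * x * (x - 1) ^ 2 * (x - 2)
    + x * (x - 1) ^ 2 * (x - 2) ^ 2 * (x - 3)

theorem nine_mul_sum_T {n : ℕ} (hn : 0 < n) :
    9 * ∑ k ∈ Finset.Icc 1 4, (T n k : ℤ) = sumPoly n := by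
  have hT (k : ℕ) (hk : 0 < k) : (T n k : ℚ) = n.choose k * n.choose (k - 1) * 2 ^ k / n := by
    rw [eq_div_iff (by positivity)]
    exact_mod_cast (mul_comm n _).symm.trans (mul_T_eq hk)
  suffices 9 * ∑ k ∈ Finset.Icc 1 4, (T n k : ℚ) = sumPoly n by exact_mod_cast this
  simp only [Finset.sum_Icc_succ_top (by norm_num : 1 ≤ _), Finset.Icc_self, Finset.sum_singleton]
  norm_num [hT, Nat.cast_choose_eq_descPochhammer_div, descPochhammer_succ_right, sumPoly,
    Nat.factorial]
  field_simp
  ring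

def sumPolyDeriv (x : ℤ) : ℤ := 6 * x ^ 5 - 45 * x ^ 4 + 148 * x ^ 3 - 225 * x ^ 2 + 176 * x - 42

theorem sumPoly_add (x h : ℤ) : sumPoly (x + h) = sumPoly x + h * sumPolyDeriv x
    + h ^ 2 * (15 * x ^ 4 - 90 * x ^ 3 + 222 * x ^ 2 - 225 * x + 88)
    + h ^ 3 * (20 * x ^ 3 - 90 * x ^ 2 + 148 * x - 75 + h * (15 * x ^ 2 - 45 * x + 37)
      + h ^ 2 * (6 * x - 9) + h ^ 3) := by
  unfold sumPoly sumPolyDeriv; ring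

theorem two_dvd_sumPoly_taylor_two (x : ℤ) :
    2 ∣ 15 * x ^ 4 - 90 * x ^ 3 + 222 * x ^ 2 - 225 * x + 88 := by
  apply (ZMod.intCast_zmod_eq_zero_iff_dvd _ 2).mp
  push_cast
  generalize (x : ZMod 2) = y
  revert y
  decide

theorem sumPoly_add_modEq {h : ℤ} (x : ℤ) (h4 : 4 ∣ h) :
    sumPoly (x + h) ≡ sumPoly x + h * sumPolyDeriv x [ZMOD 8 * h] := by
  have h8 : 8 ∣ h * h := by
    obtain ⟨k, rfl⟩ := h4
    exact ⟨2 * k * k, by ring⟩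
  have h8' : 8 ∣ h * (15 * x ^ 4 - 90 * x ^ 3 + 222 * x ^ 2 - 225 * x + 88) := by
    obtain ⟨k, rfl⟩ := h4
    obtain ⟨c, hc⟩ := two_dvd_sumPoly_taylor_two x
    exact ⟨k * c, by rw [hc]; ring⟩
  rw [sumPoly_add, Int.modEq_iff_dvd, sub_add_eq_sub_sub, sub_add_eq_sub_sub, sub_self, zero_sub,
    mul_comm 8 h]
  refine dvd_add (dvd_neg.mpr ?_) (dvd_neg.mpr ?_)
  · rw [sq, mul_assoc]
    exact mul_dvd_mul_left h h8'
  · rw [pow_succ', sq, mul_assoc]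
    exact mul_dvd_mul_left h (h8.mul_right _)

theorem sumPolyDeriv_modEq (m : ℕ) : sumPolyDeriv (m + 1) ≡ 18 * (-1) ^ (m / 2) [ZMOD 8] := by
  obtain ⟨q, r, hr, rfl⟩ : ∃ q r, r < 8 ∧ m = r + 8 * q := ⟨m / 8, m % 8, by omega, by omega⟩
  rw [show (r + 8 * q) / 2 = r / 2 + 2 * (2 * q) by omega, pow_add, pow_mul, neg_one_sq, one_pow,
    mul_one]
  apply (ZMod.intCast_eq_intCast_iff _ _ 8).mp
  push_cast [sumPolyDeriv]
  rw [show (8 : ZMod 8) = 0 from rfl, zero_mul, add_zero]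
  interval_cases r <;> decide

theorem T_sum_first_four (n α : ℕ) (hn : 4 ≤ n) (hα : 2 ≤ α) :
    (∑ k ∈ Finset.Icc 1 4, (T (n + 2 ^ α) k : ℤ))
      ≡ (∑ k ∈ Finset.Icc 1 4, (T n k : ℤ)) + (-1) ^ ((n - 1) / 2) * 2 ^ (α + 1)
        [ZMOD 2 ^ (α + 3)] := by
  obtain ⟨m, rfl⟩ : ∃ m, n = m + 1 := ⟨n - 1, by omega⟩
  have h4 : (4 : ℤ) ∣ 2 ^ α := by simpa using pow_dvd_pow (2 : ℤ) hα
  have key : 9 * ∑ k ∈ Finset.Icc 1 4, (T (m + 1 + 2 ^ α) k : ℤ)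
      ≡ 9 * ((∑ k ∈ Finset.Icc 1 4, (T (m + 1) k : ℤ)) + (-1) ^ (m / 2) * 2 ^ (α + 1))
        [ZMOD 2 ^ (α + 3)] := by
    rw [nine_mul_sum_T (by positivity), mul_add, nine_mul_sum_T (by positivity), pow_add,
      mul_comm (2 ^ α)]
    push_cast
    calc sumPoly (m + 1 + 2 ^ α)
        ≡ sumPoly (m + 1) + 2 ^ α * sumPolyDeriv (m + 1) [ZMOD 8 * 2 ^ α] :=
          sumPoly_add_modEq _ h4
      _ ≡ sumPoly (m + 1) + 2 ^ α * (18 * (-1) ^ (m / 2)) [ZMOD 8 * 2 ^ α] := by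
          rw [mul_comm 8]
          exact ((sumPolyDeriv_modEq m).mul_left' (c := 2 ^ α)).add_left _
      _ = sumPoly (m + 1) + 9 * ((-1) ^ (m / 2) * 2 ^ (α + 1)) := by ring
  have hcop : IsCoprime ((2 : ℤ) ^ (α + 3)) 9 :=
    IsCoprime.pow_left (by norm_num [Int.isCoprime_iff_gcd_eq_one])
  rw [Nat.add_sub_cancel, Int.modEq_iff_dvd]
  rw [Int.modEq_iff_dvd, ← mul_sub] at key
  exact hcop.dvd_of_dvd_mul_left key
end
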